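/- Let d ≥ 2 be an integer, γ ∈ ℝ, and let n, j ∈ ℕ with j ≤ n; set m = n − j. Assume 2n + γ + d − r − 1 ≠ 0 for every integer 0 ≤ r ≤ j. Let p be a real polynomial of degree exactly j and set h(t) = p(t) t^m. Then the identity t²(1−t) h″(t) + t(d−1−(d+γ)t) h′(t) − m(m+d−2) h(t) = −n(n+γ+d−1) · t · h(t) holds for all real t if and only if there exists a nonzero constant c with p(t) = c · P_j^{(2n−2j+d−2, γ)}(1−2t) for all t. -/
import Mathlib


open MeasureTheory Finset

noncomputable section

/-- Pochhammer symbol `(x)_k`. -/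
def poch (x : ℝ) (k : ℕ) : ℝ := (ascPochhammer ℝ k).eval x

/-- Jacobi polynomial `P_n^{(a,b)}` for real parameters. -/
def jacobiP (a b : ℝ) (n : ℕ) (t : ℝ) : ℝ :=
  (poch (a + 1) n / (n.factorial : ℝ)) *
    ∑ k ∈ Finset.range (n + 1),
      poch (-(n : ℝ)) k * poch ((n : ℝ) + a + b + 1) k /
        ((k.factorial : ℝ) * poch (a + 1) k) * ((1 - t) / 2) ^ k

/-- Normalizing constant `A_n^{(a,b)}`. -/
def jacobiA (a b : ℝ) (n : ℕ) : ℝ := 2 ^ n / poch ((n : ℝ) + a + b + 1) n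

/-- Normalized Jacobi polynomial `P̂_n^{(a,b)}`. -/
def jacobiPhat (a b : ℝ) (n : ℕ) (t : ℝ) : ℝ := jacobiA a b n * jacobiP a b n t

/-- The polynomials `J_n^{(a-s,b-s)}` (defined from the parameters `a, b > -1`). -/
def jacobiJ (a b : ℝ) (s n : ℕ) (t : ℝ) : ℝ :=
  if n < s then (1 + t) ^ n / (n.factorial : ℝ)
  else ∫ u in (-1 : ℝ)..t, (t - u) ^ (s - 1) / ((s - 1).factorial : ℝ) * jacobiPhat a b (n - s) u

open Polynomial in
lemma poch_zero' (x : ℝ) : poch x 0 = 1 := by simp [poch]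

open Polynomial in
lemma poch_succ' (x : ℝ) (k : ℕ) : poch x (k+1) = poch x k * (x + k) := by
  simp [poch, ascPochhammer_succ_right]

lemma poch_pos' {x : ℝ} (hx : 0 < x) (k : ℕ) : 0 < poch x k := by
  induction k with
  | zero => simp [poch_zero']
  | succ k ih => rw [poch_succ']; positivity

lemma poch_neg_eq_zero' (j i : ℕ) (hi : j < i) : poch (-(j:ℝ)) i = 0 := by
  obtain ⟨s, rfl⟩ := Nat.exists_eq_add_of_lt hi
  induction s with
  | zero => rw [poch_succ']; simp
  | succ s ih => rw [show j + (s+1) + 1 = (j + s + 1) + 1 by ring, poch_succ',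
      ih (by omega)]; ring

/-- coefficient of `t^i` in `P_j^{(a,γ)}(1-2t)`. -/
def cJ (a γ : ℝ) (j : ℕ) (i : ℕ) : ℝ :=
  (poch (a + 1) j / (j.factorial : ℝ)) *
    (poch (-(j:ℝ)) i * poch ((j:ℝ) + a + γ + 1) i / ((i.factorial : ℝ) * poch (a + 1) i))

lemma cJ_zero (a γ : ℝ) (j : ℕ) : cJ a γ j 0 = poch (a+1) j / (j.factorial : ℝ) := by
  simp [cJ, poch_zero']

lemma cJ_eq_zero (a γ : ℝ) (j i : ℕ) (hi : j < i) : cJ a γ j i = 0 := by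
  simp [cJ, poch_neg_eq_zero' j i hi]

lemma cJ_rec (a γ : ℝ) (ha : 0 < a + 1) (j i : ℕ) :
    ((i:ℝ)+1) * (a + i + 1) * cJ a γ j (i+1)
      = ((i:ℝ) - j) * ((i:ℝ) + j + a + γ + 1) * cJ a γ j i := by
  have h1 : poch (a+1) (i+1) = poch (a+1) i * (a + 1 + i) := poch_succ' _ _
  have h2 : poch (-(j:ℝ)) (i+1) = poch (-(j:ℝ)) i * (-(j:ℝ) + i) := poch_succ' _ _
  have h3 : poch ((j:ℝ) + a + γ + 1) (i+1)
      = poch ((j:ℝ) + a + γ + 1) i * ((j:ℝ) + a + γ + 1 + i) := poch_succ' _ _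
  have h4 : (0:ℝ) < poch (a+1) i := poch_pos' ha i
  have h5 : ((i+1).factorial : ℝ) = ((i:ℝ)+1) * (i.factorial : ℝ) := by
    push_cast [Nat.factorial_succ]; ring
  have h6 : (i.factorial : ℝ) ≠ 0 := by positivity
  unfold cJ
  rw [h1, h2, h3, h5]
  field_simp
  ring

def Ac (d m : ℕ) (k : ℕ) : ℝ := (k:ℝ)*((k:ℝ)+(d:ℝ)-2) - (m:ℝ)*((m:ℝ)+(d:ℝ)-2)

def Bc (d : ℕ) (γ : ℝ) (n : ℕ) (k : ℕ) : ℝ :=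
  ((k:ℝ)-1)*((k:ℝ)+(d:ℝ)+γ-2) - (n:ℝ)*((n:ℝ)+γ+(d:ℝ)-1)

open Polynomial in
def Qp (d : ℕ) (γ : ℝ) (n m : ℕ) (h : ℝ[X]) : ℝ[X] :=
  derivative (derivative h) * X^2 - derivative (derivative h) * X^3
  + C ((d:ℝ)-1) * (derivative h * X^1) - C ((d:ℝ)+γ) * (derivative h * X^2)
  - C ((m:ℝ)*((m:ℝ)+(d:ℝ)-2)) * h + C ((n:ℝ)*((n:ℝ)+γ+(d:ℝ)-1)) * (h * X^1)

open Polynomial in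
lemma Qp_coeff_zero (d : ℕ) (γ : ℝ) (n m : ℕ) (h : ℝ[X]) :
    (Qp d γ n m h).coeff 0 = Ac d m 0 * h.coeff 0 := by
  simp only [Qp, Ac, coeff_add, coeff_sub, coeff_C_mul, coeff_mul_X_pow']
  norm_num

open Polynomial in
lemma Qp_coeff_succ (d : ℕ) (γ : ℝ) (n m : ℕ) (h : ℝ[X]) (k : ℕ) :
    (Qp d γ n m h).coeff (k+1)
      = Ac d m (k+1) * h.coeff (k+1) - Bc d γ n (k+1) * h.coeff k := by
  match k with
  | 0 =>
    simp only [Qp, Ac, Bc, coeff_add, coeff_sub, coeff_C_mul, coeff_mul_X_pow',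
      coeff_derivative]
    norm_num
    ring
  | 1 =>
    simp only [Qp, Ac, Bc, coeff_add, coeff_sub, coeff_C_mul, coeff_mul_X_pow',
      coeff_derivative]
    norm_num
    ring
  | (k+2) =>
    have e1 : k + 2 + 1 - 1 = k + 2 := by omega
    have e2 : k + 2 + 1 - 2 = k + 1 := by omega
    have e3 : k + 2 + 1 - 3 = k := by omega
    simp only [Qp, Ac, Bc, coeff_add, coeff_sub, coeff_C_mul, coeff_mul_X_pow',
      if_pos (show 1 ≤ k + 2 + 1 by omega), if_pos (show 2 ≤ k + 2 + 1 by omega),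
      if_pos (show 3 ≤ k + 2 + 1 by omega), e1, e2, e3, coeff_derivative]
    push_cast
    ring

open Polynomial in
/-- `Z_{j,n} = p(t) Y(x)` is an eigenfunction of `D_γ` with eigenvalue
`-n(n+γ+d-1)` exactly when `p` is a multiple of the Jacobi polynomial
`P_j^{(2n-2j+d-2,γ)}(1-2t)`. -/
theorem eigen_iff_jacobi (d : ℕ) (hd : 2 ≤ d) (γ : ℝ) (n j : ℕ) (hj : j ≤ n)
    (hreg : ∀ r : ℕ, r ≤ j → 2 * (n : ℝ) + γ + d - r - 1 ≠ 0)
    (p : Polynomial ℝ) (hdeg : p.degree = j) :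
    (∀ t : ℝ,
      t ^ 2 * (1 - t) * deriv (deriv (fun u => p.eval u * u ^ (n - j))) t
          + t * ((d : ℝ) - 1 - ((d : ℝ) + γ) * t) *
              deriv (fun u => p.eval u * u ^ (n - j)) t
          - ((n : ℝ) - j) * (((n : ℝ) - j) + d - 2) * (p.eval t * t ^ (n - j))
        = -(n : ℝ) * ((n : ℝ) + γ + d - 1) * t * (p.eval t * t ^ (n - j)))
    ↔ ∃ c : ℝ, c ≠ 0 ∧
        ∀ t : ℝ, p.eval t = c * jacobiP (2 * (n : ℝ) - 2 * j + d - 2) γ j (1 - 2 * t) := by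
  set m := n - j with hmdef
  have hm : (m:ℝ) = (n:ℝ) - (j:ℝ) := by
    rw [hmdef, Nat.cast_sub hj]
  have hn : (n:ℝ) = (m:ℝ) + (j:ℝ) := by rw [hm]; ring
  set a : ℝ := 2 * (n : ℝ) - 2 * j + d - 2 with hadef
  have ha : a = 2*(m:ℝ) + (d:ℝ) - 2 := by rw [hadef, hm]; ring
  have hd2 : (2:ℝ) ≤ (d:ℝ) := by exact_mod_cast hd
  have hmnn : (0:ℝ) ≤ (m:ℝ) := Nat.cast_nonneg m
  have ha1 : 0 < a + 1 := by rw [ha]; linarith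
  set h : ℝ[X] := p * X ^ m with hhdef
  -- coefficients of h
  have hco : ∀ i : ℕ, h.coeff (m + i) = p.coeff i := by
    intro i; rw [hhdef, show m + i = i + m by ring, coeff_mul_X_pow]
  have hco0 : ∀ i : ℕ, i < m → h.coeff i = 0 := by
    intro i hi; rw [hhdef, coeff_mul_X_pow', if_neg (by omega)]
  -- identification of recurrence coefficients
  have hAc : ∀ i : ℕ, Ac d m (m + i + 1) = ((i:ℝ)+1) * (a + i + 1) := by
    intro i; unfold Ac; rw [ha]; push_cast; ring
  have hBc : ∀ i : ℕ, Bc d γ n (m + i + 1) = ((i:ℝ) - j) * ((i:ℝ) + j + a + γ + 1) := by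
    intro i; unfold Bc; rw [ha, hn]; push_cast; ring
  have hAne : ∀ i : ℕ, ((i:ℝ)+1) * (a + i + 1) ≠ 0 := by
    intro i
    have h1 : (0:ℝ) < (i:ℝ)+1 := by positivity
    have h2 : (0:ℝ) < a + i + 1 := by
      have : (0:ℝ) ≤ (i:ℝ) := Nat.cast_nonneg i
      linarith
    exact mul_ne_zero h1.ne' h2.ne'
  have hcJ0 : cJ a γ j 0 ≠ 0 := by
    rw [cJ_zero]
    have h1 := poch_pos' ha1 j
    have h2 : (0:ℝ) < (j.factorial : ℝ) := by positivity
    positivity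
  -- the evaluated Jacobi polynomial as a finite sum
  have hjac : ∀ t : ℝ, jacobiP a γ j (1 - 2 * t)
      = ∑ i ∈ Finset.range (j+1), cJ a γ j i * t ^ i := by
    intro t
    rw [jacobiP, Finset.mul_sum]
    refine Finset.sum_congr rfl fun i _ => ?_
    rw [cJ, show (1 - (1 - 2*t))/2 = t by ring]
    ring
  -- analytic identity ↔ polynomial identity
  have hf : (fun u : ℝ => p.eval u * u ^ m) = fun u => h.eval u := by
    funext u; simp [hhdef]
  have hd1 : (deriv fun u : ℝ => p.eval u * u ^ m) = fun t => (derivative h).eval t := by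
    rw [hf]; funext t; exact Polynomial.deriv h
  have hdd : (deriv (deriv fun u : ℝ => p.eval u * u ^ m))
      = fun t => (derivative (derivative h)).eval t := by
    rw [hd1]; funext t; exact Polynomial.deriv _
  have hQeval : ∀ t : ℝ,
      (Qp d γ n m h).eval t
        = (t ^ 2 * (1 - t) * deriv (deriv (fun u => p.eval u * u ^ m)) t
            + t * ((d : ℝ) - 1 - ((d : ℝ) + γ) * t) *
                deriv (fun u => p.eval u * u ^ m) t
            - ((n : ℝ) - j) * (((n : ℝ) - j) + d - 2) * (p.eval t * t ^ m))
          - (-(n : ℝ) * ((n : ℝ) + γ + d - 1) * t * (p.eval t * t ^ m)) := by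
    intro t
    rw [hdd, hd1]
    have hev : h.eval t = p.eval t * t ^ m := by simp [hhdef]
    simp only [Qp, eval_add, eval_sub, eval_mul, eval_pow, eval_X, eval_C, hev]
    rw [← hm]
    ring
  have step1 : (∀ t : ℝ,
      t ^ 2 * (1 - t) * deriv (deriv (fun u => p.eval u * u ^ m)) t
          + t * ((d : ℝ) - 1 - ((d : ℝ) + γ) * t) *
              deriv (fun u => p.eval u * u ^ m) t
          - ((n : ℝ) - j) * (((n : ℝ) - j) + d - 2) * (p.eval t * t ^ m)
        = -(n : ℝ) * ((n : ℝ) + γ + d - 1) * t * (p.eval t * t ^ m))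
      ↔ Qp d γ n m h = 0 := by
    constructor
    · intro H
      apply Polynomial.funext
      intro t
      rw [eval_zero, hQeval t, H t, sub_self]
    · intro H t
      rw [← sub_eq_zero, ← hQeval t, H, eval_zero]
  have h00 : Ac d m 0 * h.coeff 0 = 0 := by
    rcases Nat.eq_zero_or_pos m with hm0 | hm0
    · have : Ac d m 0 = 0 := by unfold Ac; rw [hm0]; push_cast; ring
      rw [this, zero_mul]
    · rw [hco0 0 hm0, mul_zero]
  have step2 : Qp d γ n m h = 0
      ↔ ∀ k : ℕ, Ac d m (k+1) * h.coeff (k+1) = Bc d γ n (k+1) * h.coeff k := by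
    rw [Polynomial.ext_iff]
    constructor
    · intro H k
      have := H (k+1)
      rw [Qp_coeff_succ, coeff_zero] at this
      linarith
    · intro H s
      rw [coeff_zero]
      cases s with
      | zero => rw [Qp_coeff_zero]; exact h00
      | succ k => rw [Qp_coeff_succ, H k, sub_self]
  rw [step1, step2]
  constructor
  · intro hrec
    set c : ℝ := p.coeff 0 / cJ a γ j 0 with hcdef
    have hall : ∀ i, p.coeff i = c * cJ a γ j i := by
      intro i
      induction i with
      | zero => rw [hcdef, div_mul_cancel₀ _ hcJ0]
      | succ i ih =>
        have h1 := hrec (m + i)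
        rw [show h.coeff (m+i+1) = p.coeff (i+1) from hco (i+1), hco i,
          hAc i, hBc i, ih] at h1
        have h2 := cJ_rec a γ ha1 j i
        apply mul_left_cancel₀ (hAne i)
        linear_combination h1 - c * h2
    have hc0 : c ≠ 0 := by
      intro hc
      have hcj := Polynomial.coeff_ne_zero_of_eq_degree hdeg
      rw [hall j, hc, zero_mul] at hcj
      exact hcj rfl
    refine ⟨c, hc0, fun t => ?_⟩
    rw [hjac t, Finset.mul_sum]
    have hnd : p.natDegree = j := natDegree_eq_of_degree_eq_some hdeg
    rw [Polynomial.eval_eq_sum_range, hnd]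
    exact Finset.sum_congr rfl fun i _ => by rw [hall i]; ring
  · rintro ⟨c, hc, hpt⟩ k
    have hpall : ∀ i, p.coeff i = c * cJ a γ j i := by
      have hpq : p = ∑ i ∈ Finset.range (j+1), Polynomial.monomial i (c * cJ a γ j i) := by
        apply Polynomial.funext
        intro t
        rw [hpt t, hjac t, Finset.mul_sum, Polynomial.eval_finset_sum]
        exact Finset.sum_congr rfl fun i _ => by rw [Polynomial.eval_monomial]; ring
      intro i
      rw [hpq, Polynomial.finset_sum_coeff]
      simp only [Polynomial.coeff_monomial]
      rw [Finset.sum_ite_eq' (Finset.range (j+1)) i (fun b => c * cJ a γ j b)]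
      by_cases hij : i ∈ Finset.range (j+1)
      · rw [if_pos hij]
      · rw [if_neg hij]
        rw [cJ_eq_zero a γ j i (by simpa using hij), mul_zero]
    by_cases hk1 : k + 1 < m
    · rw [hco0 _ hk1, hco0 _ (by omega), mul_zero, mul_zero]
    · by_cases hk2 : k + 1 = m
      · have hAm : Ac d m (k+1) = 0 := by unfold Ac; rw [hk2]; ring
        rw [hAm, zero_mul, hco0 k (by omega), mul_zero]
      · have hkm : m ≤ k := by omega
        obtain ⟨i, rfl⟩ := Nat.exists_eq_add_of_le hkm
        rw [show h.coeff (m+i+1) = p.coeff (i+1) from hco (i+1), hco i,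
          hAc i, hBc i, hpall (i+1), hpall i]
        have h2 := cJ_rec a γ ha1 j i
        linear_combination c * h2

end
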